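/- Let n = n₁ + n₂ with n₁, n₂ ≥ 1, and let p ∈ [0,1], δ ∈ (0,1), and α ∈ (0,1). Then U(0,n,δ) < α·U(0,n₁,δ/2) + (1-α)·U(0,n₂,δ/2). -/
import Mathlib


/-- Extended Bernoulli KL divergence `d(p,q)` with limit values at the boundary. -/
noncomputable def dExt (p q : ℝ) : EReal :=
  if p = 0 then (if q = 1 then ⊤ else ((Real.log (1 / (1 - q)) : ℝ) : EReal))
  else if p = 1 then (if q = 0 then ⊤ else ((Real.log (1 / q) : ℝ) : EReal))
  else if q = 0 ∨ q = 1 then ⊤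
  else ((p * Real.log (p / q) + (1 - p) * Real.log ((1 - p) / (1 - q)) : ℝ) : EReal)

/-- `U(p,n,δ) = sup {q ∈ [0,1] : d(p,q) ≤ ln(1/δ)/n}`. -/
noncomputable def Ubound (p : ℝ) (n : ℕ) (δ : ℝ) : ℝ :=
  sSup {q ∈ Set.Icc (0:ℝ) 1 | dExt p q ≤ ((Real.log (1 / δ) / n : ℝ) : EReal)}

/-- `L(p,n,δ) = inf {q ∈ [0,1] : d(p,q) ≤ ln(1/δ)/n}`. -/
noncomputable def Lbound (p : ℝ) (n : ℕ) (δ : ℝ) : ℝ :=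
  sInf {q ∈ Set.Icc (0:ℝ) 1 | dExt p q ≤ ((Real.log (1 / δ) / n : ℝ) : EReal)}

lemma Ubound_zero (m : ℕ) (hm : 1 ≤ m) (δ : ℝ) (hδ : δ ∈ Set.Ioo (0:ℝ) 1) :
    Ubound 0 m δ = 1 - δ ^ ((m:ℝ)⁻¹) := by
  obtain ⟨hδ0, hδ1⟩ := hδ
  have hm0 : (0:ℝ) < m := by exact_mod_cast hm
  have key : δ ^ ((m:ℝ)⁻¹) = Real.exp (Real.log δ / m) := by
    rw [Real.rpow_def_of_pos hδ0, div_eq_inv_mul, mul_comm]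
  have hpow0 : 0 < δ ^ ((m:ℝ)⁻¹) := Real.rpow_pos_of_pos hδ0 _
  have hpow1 : δ ^ ((m:ℝ)⁻¹) ≤ 1 :=
    Real.rpow_le_one hδ0.le hδ1.le (by positivity)
  have hset : {q ∈ Set.Icc (0:ℝ) 1 | dExt 0 q ≤ ((Real.log (1 / δ) / m : ℝ) : EReal)}
      = Set.Icc 0 (1 - δ ^ ((m:ℝ)⁻¹)) := by
    ext q
    have hd : dExt 0 q = if q = 1 then ⊤ else ((Real.log (1 / (1 - q)) : ℝ) : EReal) := by
      rw [dExt, if_pos rfl]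
    simp only [Set.mem_setOf_eq, Set.mem_Icc, hd]
    constructor
    · rintro ⟨⟨hq0, hq1⟩, hcond⟩
      by_cases hq : q = 1
      · rw [if_pos hq] at hcond
        exact absurd hcond (by simp)
      rw [if_neg hq, EReal.coe_le_coe_iff] at hcond
      have hq1' : q < 1 := lt_of_le_of_ne hq1 hq
      have h1q : 0 < 1 - q := by linarith
      rw [one_div, Real.log_inv, one_div, Real.log_inv] at hcond
      have : Real.log δ / m ≤ Real.log (1 - q) := by
        rw [neg_le, ← neg_div, neg_neg] at hcond
        exact hcond
      have := Real.exp_le_exp.2 this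
      rw [Real.exp_log h1q] at this
      rw [← key] at this
      exact ⟨hq0, by linarith⟩
    · rintro ⟨hq0, hq1⟩
      have hq1' : q < 1 := by linarith
      refine ⟨⟨hq0, by linarith⟩, ?_⟩
      rw [if_neg (ne_of_lt hq1'), EReal.coe_le_coe_iff]
      have h1q : 0 < 1 - q := by linarith
      have h1 : δ ^ ((m:ℝ)⁻¹) ≤ 1 - q := by linarith
      have h2 : Real.log δ / m ≤ Real.log (1 - q) := by
        calc Real.log δ / m = Real.log (δ ^ ((m:ℝ)⁻¹)) := by
              rw [key, Real.log_exp]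
          _ ≤ Real.log (1 - q) := Real.log_le_log hpow0 h1
      rw [one_div, Real.log_inv, one_div, Real.log_inv, neg_div] at *
      linarith
  rw [Ubound, hset, csSup_Icc (by linarith)]

theorem stmt_16 (n n₁ n₂ : ℕ) (hn : n = n₁ + n₂) (hn₁ : 1 ≤ n₁) (hn₂ : 1 ≤ n₂)
    (p : ℝ) (hp : p ∈ Set.Icc (0:ℝ) 1)
    (δ : ℝ) (hδ : δ ∈ Set.Ioo (0:ℝ) 1) (α : ℝ) (hα : α ∈ Set.Ioo (0:ℝ) 1) :
    Ubound 0 n δ < α * Ubound 0 n₁ (δ / 2) + (1 - α) * Ubound 0 n₂ (δ / 2) := by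
  obtain ⟨hδ0, hδ1⟩ := hδ
  obtain ⟨hα0, hα1⟩ := hα
  have hn' : 1 ≤ n := by omega
  have hδ2 : δ / 2 ∈ Set.Ioo (0:ℝ) 1 := ⟨by linarith, by linarith⟩
  rw [Ubound_zero n hn' δ ⟨hδ0, hδ1⟩, Ubound_zero n₁ hn₁ _ hδ2,
    Ubound_zero n₂ hn₂ _ hδ2]
  have key : ∀ m : ℕ, 1 ≤ m → m ≤ n → (δ / 2) ^ ((m:ℝ)⁻¹) < δ ^ ((n:ℝ)⁻¹) := by
    intro m hm hmn
    have hm0 : (0:ℝ) < m := by exact_mod_cast hm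
    have hn0 : (0:ℝ) < n := by exact_mod_cast hn'
    calc (δ / 2) ^ ((m:ℝ)⁻¹) < δ ^ ((m:ℝ)⁻¹) := by
          apply Real.rpow_lt_rpow (by linarith) (by linarith) (by positivity)
      _ ≤ δ ^ ((n:ℝ)⁻¹) := by
          apply Real.rpow_le_rpow_of_exponent_ge hδ0 hδ1.le
          apply inv_anti₀ hm0
          exact_mod_cast hmn
  have h1 := key n₁ hn₁ (by omega)
  have h2 := key n₂ hn₂ (by omega)
  nlinarith
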